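/- Let q : ℝ×ℝ → ℂ be smooth, ρ ∈ ℝ, and define r(x,t) := −q(−x,−t). Then the pair (q,r) satisfies the coupled system (S) at every (x,t) ∈ ℝ² if and only if q satisfies the reverse space-time nonlocal equation (E) at every (x,t) ∈ ℝ². -/

import Mathlib

open Complex

/-- Partial derivative in the space variable `x` (first coordinate). -/
noncomputable def pdx (f : ℝ × ℝ → ℂ) : ℝ × ℝ → ℂ :=
  fun p => deriv (fun x => f (x, p.2)) p.1

/-- Partial derivative in the time variable `t` (second coordinate). -/
noncomputable def pdt (f : ℝ × ℝ → ℂ) : ℝ × ℝ → ℂ :=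
  fun p => deriv (fun t => f (p.1, t)) p.2

/-- The coupled system (S). -/
def CoupledS (q r : ℝ × ℝ → ℂ) (ρ : ℝ) : Prop :=
  ∀ p : ℝ × ℝ,
    I * pdt q p + I * pdx (pdx (pdx q)) p
        + (3 * q p * r p + 2 * (ρ : ℂ)) * pdx (pdx q) p
        + 3 * r p * (pdx q p) ^ 2
        + (1 / 2) * (-9 * I * (q p) ^ 2 * (r p) ^ 2 - 20 * I * (ρ : ℂ) * q p * r p
            + 8 * I * (ρ : ℂ) ^ 2 + 6 * q p * pdx r p) * pdx q p
        + I * (-3 * (q p) ^ 3 * r p - 2 * (ρ : ℂ) * (q p) ^ 2) * pdx r p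
        - 3 * (ρ : ℂ) * (r p) ^ 2 * (q p) ^ 3
        - 4 * (ρ : ℂ) ^ 2 * r p * (q p) ^ 2
        + 8 * ((ρ : ℂ) ^ 3 - (ρ : ℂ) ^ 2) * q p = 0 ∧
    I * pdt r p + I * pdx (pdx (pdx r)) p
        - (3 * q p * r p + 2 * (ρ : ℂ)) * pdx (pdx r) p
        - 3 * q p * (pdx r p) ^ 2
        + (1 / 2) * (-9 * I * (q p) ^ 2 * (r p) ^ 2 - 20 * I * (ρ : ℂ) * q p * r p
            + 8 * I * (ρ : ℂ) ^ 2 - 6 * r p * pdx q p) * pdx r p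
        + I * (-3 * (r p) ^ 3 * q p - 2 * (ρ : ℂ) * (r p) ^ 2) * pdx q p
        + 3 * (ρ : ℂ) * (r p) ^ 3 * (q p) ^ 2
        + 4 * (ρ : ℂ) ^ 2 * (r p) ^ 2 * q p
        + 8 * (-(ρ : ℂ) ^ 3 + (ρ : ℂ) ^ 2) * r p = 0

/-- The reverse space-time reflection `q̃(x,t) = q(-x,-t)`. -/
def tq (q : ℝ × ℝ → ℂ) : ℝ × ℝ → ℂ := fun p => q (-p.1, -p.2)

/-- `q̂₁(x,t) = (∂ₓq)(-x,-t)`. -/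
noncomputable def hq1 (q : ℝ × ℝ → ℂ) : ℝ × ℝ → ℂ := fun p => pdx q (-p.1, -p.2)

/-- `q̂₂(x,t) = (∂ₓ²q)(-x,-t)`. -/
noncomputable def hq2 (q : ℝ × ℝ → ℂ) : ℝ × ℝ → ℂ := fun p => pdx (pdx q) (-p.1, -p.2)

/-- The reverse space-time nonlocal equation (E) at a single point. -/
noncomputable def NonlocalEAt (q : ℝ × ℝ → ℂ) (ρ : ℝ) (p : ℝ × ℝ) : Prop :=
  I * pdt q p + I * pdx (pdx (pdx q)) p
    - 3 * pdx (fun p' => q p' * tq q p' * pdx q p' + (I / 2) * (q p') ^ 3 * (tq q p') ^ 2) p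
    + (ρ : ℂ) * (2 * pdx (pdx q) p - 3 * (q p) ^ 3 * (tq q p) ^ 2)
    + (ρ : ℂ) * (-2 * I * (q p) ^ 2 * hq1 q p + 10 * I * q p * tq q p * pdx q p)
    + (ρ : ℂ) ^ 2 * (4 * (q p) ^ 2 * tq q p + 4 * I * pdx q p - 8 * q p)
    + 8 * (ρ : ℂ) ^ 3 * q p = 0

/-- The reverse space-time nonlocal equation (E). -/
noncomputable def NonlocalE (q : ℝ × ℝ → ℂ) (ρ : ℝ) : Prop :=
  ∀ p : ℝ × ℝ, NonlocalEAt q ρ p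

lemma hasDerivAt_slice_x {f : ℝ×ℝ → ℂ} (hf : ContDiff ℝ (⊤ : ℕ∞) f) (a b : ℝ) :
    HasDerivAt (fun x => f (x, b)) (fderiv ℝ f (a,b) (1,0)) a := by
  have h1 : HasDerivAt (fun x : ℝ => (x, b)) ((1:ℝ), (0:ℝ)) a :=
    HasDerivAt.prodMk (hasDerivAt_id a) (hasDerivAt_const a b)
  exact (hf.differentiable (by simp) (a,b)).hasFDerivAt.comp_hasDerivAt a h1

lemma hasDerivAt_slice_t {f : ℝ×ℝ → ℂ} (hf : ContDiff ℝ (⊤ : ℕ∞) f) (a b : ℝ) :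
    HasDerivAt (fun t => f (a, t)) (fderiv ℝ f (a,b) (0,1)) b := by
  have h1 : HasDerivAt (fun t : ℝ => (a, t)) ((0:ℝ), (1:ℝ)) b :=
    HasDerivAt.prodMk (hasDerivAt_const b a) (hasDerivAt_id b)
  exact (hf.differentiable (by simp) (a,b)).hasFDerivAt.comp_hasDerivAt b h1

lemma pdx_eq {f : ℝ×ℝ → ℂ} (hf : ContDiff ℝ (⊤ : ℕ∞) f) (p : ℝ×ℝ) :
    pdx f p = fderiv ℝ f p (1,0) := by
  have := (hasDerivAt_slice_x hf p.1 p.2).deriv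
  simpa [pdx, pdt] using this

lemma pdt_eq {f : ℝ×ℝ → ℂ} (hf : ContDiff ℝ (⊤ : ℕ∞) f) (p : ℝ×ℝ) :
    pdt f p = fderiv ℝ f p (0,1) := by
  have := (hasDerivAt_slice_t hf p.1 p.2).deriv
  simpa [pdx, pdt] using this

lemma contDiff_pdx {f : ℝ×ℝ → ℂ} (hf : ContDiff ℝ (⊤ : ℕ∞) f) : ContDiff ℝ (⊤ : ℕ∞) (pdx f) := by
  have h : pdx f = fun p => fderiv ℝ f p (1,0) := funext (pdx_eq hf)
  rw [h]
  exact (hf.fderiv_right (by simp)).clm_apply contDiff_const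

lemma hasDerivAt_reflect_x {f : ℝ×ℝ → ℂ} (hf : ContDiff ℝ (⊤ : ℕ∞) f) (a b : ℝ) :
    HasDerivAt (fun x => f (-x, -b)) (-(fderiv ℝ f (-a,-b) (1,0))) a := by
  have h1 : HasDerivAt (fun x : ℝ => (-x, -b)) ((-1:ℝ), (0:ℝ)) a :=
    HasDerivAt.prodMk ((hasDerivAt_id a).neg) (hasDerivAt_const a (-b))
  have H := (hf.differentiable (by simp) (-a,-b)).hasFDerivAt.comp_hasDerivAt a h1
  have e : ((-1:ℝ), (0:ℝ)) = -((1:ℝ),(0:ℝ)) := by norm_num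
  rw [e, map_neg] at H
  exact H

lemma hasDerivAt_reflect_t {f : ℝ×ℝ → ℂ} (hf : ContDiff ℝ (⊤ : ℕ∞) f) (a b : ℝ) :
    HasDerivAt (fun t => f (-a, -t)) (-(fderiv ℝ f (-a,-b) (0,1))) b := by
  have h1 : HasDerivAt (fun t : ℝ => (-a, -t)) ((0:ℝ), (-1:ℝ)) b :=
    HasDerivAt.prodMk (hasDerivAt_const b (-a)) ((hasDerivAt_id b).neg)
  have H := (hf.differentiable (by simp) (-a,-b)).hasFDerivAt.comp_hasDerivAt b h1
  have e : ((0:ℝ), (-1:ℝ)) = -((0:ℝ),(1:ℝ)) := by norm_num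
  rw [e, map_neg] at H
  exact H

lemma pdx_reflect {f : ℝ×ℝ → ℂ} (hf : ContDiff ℝ (⊤ : ℕ∞) f) (p : ℝ×ℝ) :
    pdx (fun p' => f (-p'.1, -p'.2)) p = - pdx f (-p.1, -p.2) := by
  rw [pdx_eq hf]
  exact (hasDerivAt_reflect_x hf p.1 p.2).deriv

lemma pdx_negreflect {f : ℝ×ℝ → ℂ} (hf : ContDiff ℝ (⊤ : ℕ∞) f) (p : ℝ×ℝ) :
    pdx (fun p' => -f (-p'.1, -p'.2)) p = pdx f (-p.1, -p.2) := by
  have H := (hasDerivAt_reflect_x hf p.1 p.2).neg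
  rw [neg_neg] at H
  rw [pdx_eq hf]
  exact H.deriv

lemma pdt_negreflect {f : ℝ×ℝ → ℂ} (hf : ContDiff ℝ (⊤ : ℕ∞) f) (p : ℝ×ℝ) :
    pdt (fun p' => -f (-p'.1, -p'.2)) p = pdt f (-p.1, -p.2) := by
  have H := (hasDerivAt_reflect_t hf p.1 p.2).neg
  rw [neg_neg] at H
  rw [pdt_eq hf]
  exact H.deriv

lemma pdx2_r {q : ℝ×ℝ → ℂ} (hq : ContDiff ℝ (⊤ : ℕ∞) q) (p : ℝ×ℝ) :
    pdx (pdx (fun p' : ℝ×ℝ => -q (-p'.1,-p'.2))) p = - pdx (pdx q) (-p.1, -p.2) := by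
  have h : pdx (fun p' : ℝ×ℝ => -q (-p'.1,-p'.2)) = fun p' => pdx q (-p'.1,-p'.2) :=
    funext fun p' => pdx_negreflect hq p'
  rw [h, pdx_reflect (contDiff_pdx hq)]

lemma pdx3_r {q : ℝ×ℝ → ℂ} (hq : ContDiff ℝ (⊤ : ℕ∞) q) (p : ℝ×ℝ) :
    pdx (pdx (pdx (fun p' : ℝ×ℝ => -q (-p'.1,-p'.2)))) p
      = pdx (pdx (pdx q)) (-p.1, -p.2) := by
  have h : pdx (pdx (fun p' : ℝ×ℝ => -q (-p'.1,-p'.2)))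
      = fun p' => -pdx (pdx q) (-p'.1,-p'.2) := funext fun p' => pdx2_r hq p'
  rw [h]
  exact pdx_negreflect (contDiff_pdx (contDiff_pdx hq)) p

lemma pdx_N {q : ℝ×ℝ → ℂ} (hq : ContDiff ℝ (⊤ : ℕ∞) q) (p : ℝ×ℝ) :
    pdx (fun p' => q p' * tq q p' * pdx q p' + (I / 2) * (q p') ^ 3 * (tq q p') ^ 2) p
    = pdx q p * q (-p.1,-p.2) * pdx q p - q p * pdx q (-p.1,-p.2) * pdx q p
      + q p * q (-p.1,-p.2) * pdx (pdx q) p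
      + (3 * I / 2) * (q p)^2 * pdx q p * (q (-p.1,-p.2))^2
      - I * (q p)^3 * q (-p.1,-p.2) * pdx q (-p.1,-p.2) := by
  have h1 : HasDerivAt (fun x => q (x, p.2)) (pdx q p) p.1 := by
    rw [pdx_eq hq]; exact hasDerivAt_slice_x hq p.1 p.2
  have h2 : HasDerivAt (fun x => q (-x, -p.2)) (-(pdx q (-p.1,-p.2))) p.1 := by
    rw [pdx_eq hq]; exact hasDerivAt_reflect_x hq p.1 p.2
  have h3 : HasDerivAt (fun x => pdx q (x, p.2)) (pdx (pdx q) p) p.1 := by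
    rw [pdx_eq (contDiff_pdx hq)]; exact hasDerivAt_slice_x (contDiff_pdx hq) p.1 p.2
  have h1cube : HasDerivAt (fun x => (q (x, p.2)) ^ 3)
      ((pdx q p * q p + q p * pdx q p) * q p + q p * q p * pdx q p) p.1 := by
    have hfun : (fun x : ℝ => (q (x, p.2)) ^ 3)
        = fun x => q (x, p.2) * q (x, p.2) * q (x, p.2) := by
      funext x; ring
    rw [hfun]; exact (h1.mul h1).mul h1
  have h2sq : HasDerivAt (fun x => (q (-x, -p.2)) ^ 2)
      (-(pdx q (-p.1,-p.2)) * q (-p.1,-p.2) + q (-p.1,-p.2) * -(pdx q (-p.1,-p.2))) p.1 := by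
    have hfun : (fun x : ℝ => (q (-x, -p.2)) ^ 2)
        = fun x => q (-x, -p.2) * q (-x, -p.2) := by
      funext x; ring
    rw [hfun]; exact h2.mul h2
  have Ha := (h1.mul h2).mul h3
  have Hb := (HasDerivAt.const_mul (I/2) h1cube).mul h2sq
  have H := Ha.add Hb
  have hD : pdx (fun p' => q p' * tq q p' * pdx q p' + (I / 2) * (q p') ^ 3 * (tq q p') ^ 2) p
      = _ := H.deriv
  rw [hD]
  simp only [Prod.mk.eta, Pi.mul_apply]
  ring

/-- with the reverse space-time reduction `r(x,t) = -q(-x,-t)`,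
the coupled system (S) is equivalent to the nonlocal equation (E). -/
theorem coupled_system_iff_nonlocal_equation
    (q : ℝ × ℝ → ℂ) (hq : ContDiff ℝ (⊤ : ℕ∞) q) (ρ : ℝ) :
    CoupledS q (fun p => -q (-p.1, -p.2)) ρ ↔ NonlocalE q ρ := by
  constructor
  · intro h p
    have h1 := (h p).1
    rw [pdx_negreflect hq p] at h1
    simp only at h1
    unfold NonlocalEAt
    rw [pdx_N hq p]
    simp only [tq, hq1]
    linear_combination h1
  · intro h p
    constructor
    · have h1 := h p
      unfold NonlocalEAt at h1
      rw [pdx_N hq p] at h1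
      simp only [tq, hq1] at h1
      rw [pdx_negreflect hq p]
      simp only
      linear_combination h1
    · have h2 := h (-p.1, -p.2)
      unfold NonlocalEAt at h2
      rw [pdx_N hq (-p.1, -p.2)] at h2
      simp only [tq, hq1, neg_neg, Prod.mk.eta] at h2
      rw [pdx_negreflect hq p, pdx2_r hq p, pdx3_r hq p, pdt_negreflect hq p]
      simp only
      linear_combination h2
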